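/- arXiv:2102.09316 — 4 statements merged into one kernel-verified Lean document; each statement's English description precedes it below -/
import Mathlib

section
/- With V(x) = λ√E x + E^{3/2} x³/3, λ > 0, E ≥ 1, and f(x) = 2 e^{-2V(x)} ∫_{-∞}^x e^{2V(y)} dy, one has f(x) ~ 1/V'(x) = 1/(λ√E + E^{3/2} x²) as x → ±∞. -/
open MeasureTheory Real Set Filter


noncomputable def IDW (c k x : ℝ) : ℝ := c * x + k * x ^ 3 / 3
noncomputable def IDP (c k x : ℝ) : ℝ := c + k * x ^ 2
noncomputable def IDE (c k x : ℝ) : ℝ := Real.exp (2 * IDW c k x)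

lemma IDE_pos (c k x : ℝ) : 0 < IDE c k x := Real.exp_pos _

lemma hasDerivAt_IDW (c k x : ℝ) : HasDerivAt (fun x => 2 * IDW c k x) (2 * IDP c k x) x := by
  have h : HasDerivAt (fun x : ℝ => 2 * (c * x + k * x ^ 3 / 3))
      (2 * (c * 1 + k * (↑3 * x ^ (3 - 1)) / 3)) x :=
    (((hasDerivAt_id x).const_mul c).add
      (((hasDerivAt_pow 3 x).const_mul k).div_const 3)).const_mul 2
  have h2 : (2 : ℝ) * (c * 1 + k * (↑3 * x ^ (3 - 1)) / 3) = 2 * IDP c k x := by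
    simp [IDP]; ring
  rw [h2] at h
  exact h

lemma hasDerivAt_IDE (c k x : ℝ) : HasDerivAt (IDE c k) (2 * IDP c k x * IDE c k x) x := by
  have h := (hasDerivAt_IDW c k x).exp
  have h2 : Real.exp (2 * IDW c k x) * (2 * IDP c k x) = 2 * IDP c k x * IDE c k x := by
    rw [IDE]; ring
  rw [h2] at h
  exact h

lemma continuous_IDE (c k : ℝ) : Continuous (IDE c k) := by
  unfold IDE IDW; fun_prop

lemma continuous_IDPE (c k : ℝ) : Continuous (fun y => 2 * IDP c k y * IDE c k y) := by
  unfold IDE IDW IDP; fun_prop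

lemma IDftc (c k t b : ℝ) : ∫ y in t..b, 2 * IDP c k y * IDE c k y = IDE c k b - IDE c k t :=
  intervalIntegral.integral_eq_sub_of_hasDerivAt (fun y _ => hasDerivAt_IDE c k y)
    ((continuous_IDPE c k).intervalIntegrable _ _)

lemma ID_interval_le {c k t b m : ℝ} (htb : t ≤ b) (hm : 0 < m)
    (hP : ∀ y ∈ Icc t b, m ≤ IDP c k y) :
    ∫ y in t..b, IDE c k y ≤ (IDE c k b - IDE c k t) / (2 * m) := by
  rw [le_div_iff₀ (by linarith)]
  have key : ∫ y in t..b, 2 * m * IDE c k y ≤ ∫ y in t..b, 2 * IDP c k y * IDE c k y := by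
    apply intervalIntegral.integral_mono_on htb
      ((continuous_const.mul (continuous_IDE c k)).intervalIntegrable _ _)
      ((continuous_IDPE c k).intervalIntegrable _ _)
    intro y hy
    have := hP y hy
    have := IDE_pos c k y
    show 2 * m * IDE c k y ≤ 2 * IDP c k y * IDE c k y
    nlinarith
  rw [intervalIntegral.integral_const_mul, IDftc c k t b] at key
  linarith

lemma ID_interval_ge {c k t b M : ℝ} (htb : t ≤ b) (hM : 0 < M)
    (hP : ∀ y ∈ Icc t b, IDP c k y ≤ M) :
    (IDE c k b - IDE c k t) / (2 * M) ≤ ∫ y in t..b, IDE c k y := by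
  rw [div_le_iff₀ (by linarith)]
  have key : ∫ y in t..b, 2 * IDP c k y * IDE c k y ≤ ∫ y in t..b, 2 * M * IDE c k y := by
    apply intervalIntegral.integral_mono_on htb
      ((continuous_IDPE c k).intervalIntegrable _ _)
      ((continuous_const.mul (continuous_IDE c k)).intervalIntegrable _ _)
    intro y hy
    have := hP y hy
    have := IDE_pos c k y
    show 2 * IDP c k y * IDE c k y ≤ 2 * M * IDE c k y
    nlinarith
  rw [intervalIntegral.integral_const_mul, IDftc c k t b] at key
  linarith

lemma ID_integrableOn {c k : ℝ} (hc : 0 < c) (hk : 0 ≤ k) (b : ℝ) :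
    IntegrableOn (IDE c k) (Iic b) := by
  apply integrableOn_Iic_of_intervalIntegral_norm_bounded (IDE c k b / (2 * c)) b
    (fun i => (continuous_IDE c k).integrableOn_Ioc) tendsto_id
  filter_upwards [eventually_le_atBot b] with t ht
  have h1 : ∀ y, ‖IDE c k y‖ = IDE c k y := fun y => abs_of_pos (IDE_pos c k y)
  simp only [h1]
  have h2 : ∀ y ∈ Icc t b, c ≤ IDP c k y := by
    intro y _; rw [IDP]; nlinarith [sq_nonneg y]
  have h4 := (IDE_pos c k t).le
  calc ∫ y in t..b, IDE c k y ≤ (IDE c k b - IDE c k t) / (2*c) := ID_interval_le ht hc h2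
    _ ≤ IDE c k b / (2 * c) := by gcongr <;> linarith

lemma ID_g_le {c k : ℝ} (hc : 0 < c) (hk : 0 ≤ k) {b s : ℝ} (hs : 0 < s)
    (hsP : ∀ y ≤ b, s ≤ IDP c k y) :
    ∫ y in Iic b, IDE c k y ≤ IDE c k b / (2 * s) := by
  have hint := ID_integrableOn hc hk b
  have hlim := intervalIntegral_tendsto_integral_Iic b hint (tendsto_id (x := atBot))
  apply le_of_tendsto hlim
  filter_upwards [eventually_le_atBot b] with t ht
  have h2 : ∀ y ∈ Icc t b, s ≤ IDP c k y := fun y hy => hsP y hy.2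
  have h4 := (IDE_pos c k t).le
  calc ∫ y in t..b, IDE c k y ≤ (IDE c k b - IDE c k t) / (2*s) := ID_interval_le ht hs h2
    _ ≤ IDE c k b / (2 * s) := by gcongr <;> linarith

lemma ID_g_nonneg (c k b : ℝ) : 0 ≤ ∫ y in Iic b, IDE c k y :=
  setIntegral_nonneg measurableSet_Iic (fun y _ => (IDE_pos c k y).le)

lemma ID_g_split {c k : ℝ} (hc : 0 < c) (hk : 0 ≤ k) (b : ℝ) :
    ∫ y in Iic b, IDE c k y
      = (∫ y in Iic (b-1), IDE c k y) + ∫ y in (b-1)..b, IDE c k y := by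
  rw [← intervalIntegral.integral_Iic_sub_Iic (ID_integrableOn hc hk (b-1)) (ID_integrableOn hc hk b)]
  ring

lemma ID_q_atTop : Tendsto (fun x : ℝ => x^2 - x + 1/3) atTop atTop := by
  apply tendsto_atTop_mono (fun x => ?_) (tendsto_atTop_add_const_right _ (-1) tendsto_id)
  simp only [id]
  nlinarith [sq_nonneg (x - 1)]

lemma ID_q_atBot : Tendsto (fun x : ℝ => x^2 - x + 1/3) atBot atTop := by
  apply tendsto_atTop_mono (fun x => ?_) tendsto_neg_atBot_atTop
  nlinarith [sq_nonneg x]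

lemma ID_exp_lim {a b : ℝ} (hb : 0 < b) {l : Filter ℝ}
    (hq : Tendsto (fun x : ℝ => x^2 - x + 1/3) l atTop) :
    Tendsto (fun x : ℝ => Real.exp (-a - b*(x^2 - x + 1/3))) l (nhds 0) := by
  apply Real.tendsto_exp_atBot.comp
  have h1 : Tendsto (fun x : ℝ => b * (x^2 - x + 1/3)) l atTop := hq.const_mul_atTop hb
  have h2 : Tendsto (fun x : ℝ => -(b * (x^2 - x + 1/3))) l atBot := tendsto_neg_atTop_atBot.comp h1
  have h3 := tendsto_atBot_add_const_left l (-a) h2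
  refine h3.congr (fun x => by ring)

lemma ID_ratio_lim {a b : ℝ} (ha : 0 < a) (hb : 0 < b) {l : Filter ℝ}
    (habs : Tendsto (fun x : ℝ => |x|) l atTop) :
    Tendsto (fun x : ℝ => (a + b*x^2)/(a + b*(x-1)^2)) l (nhds 1) := by
  have hden : ∀ x : ℝ, 0 < a + b*(x-1)^2 := fun x => by nlinarith [sq_nonneg (x-1)]
  have hr : Tendsto (fun x : ℝ => b*(2*x-1)/(a + b*(x-1)^2)) l (nhds 0) := by
    refine squeeze_zero_norm' (a := fun x => 8 / |x|) ?_ ?_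
    · filter_upwards [habs.eventually_ge_atTop 4] with x ht
      have hx0 : (0:ℝ) < |x| := by linarith
      rw [Real.norm_eq_abs, abs_div, abs_of_pos (hden x), div_le_div_iff₀ (hden x) hx0]
      have h1 : abs (b*(2*x-1)) = b * abs (2*x-1) := by
        rw [abs_mul, abs_of_pos hb]
      have h2 : abs (2*x-1) ≤ 2*|x| + 1 := by
        calc abs (2*x-1) ≤ abs (2*x) + abs (1:ℝ) := abs_sub _ _
          _ = 2*|x| + 1 := by rw [abs_mul]; norm_num
      have h3 : |x| * |x| = x * x := abs_mul_abs_self x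
      have h4 : x ≤ |x| := le_abs_self x
      have h5 : -x ≤ |x| := neg_le_abs x
      rw [h1]
      have hb3 : b * (|x| * |x|) = b * (x * x) := by rw [h3]
      nlinarith [mul_le_mul_of_nonneg_left (mul_le_mul_of_nonneg_right h2 hx0.le) hb.le,
        mul_nonneg hb.le (sub_nonneg.2 h4),
        mul_nonneg (mul_nonneg hb.le (by linarith : (0:ℝ) ≤ |x| - 4)) (by linarith : (0:ℝ) ≤ |x|)]
    · exact Tendsto.div_atTop tendsto_const_nhds habs
  have heq : ∀ x : ℝ, (a + b*x^2)/(a + b*(x-1)^2) = 1 + b*(2*x-1)/(a + b*(x-1)^2) := by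
    intro x
    field_simp [(hden x).ne']
    ring
  have h6 : Tendsto (fun x : ℝ => 1 + b*(2*x-1)/(a + b*(x-1)^2)) l (nhds (1 + 0)) :=
    tendsto_const_nhds.add hr
  rw [add_zero] at h6
  exact h6.congr (fun x => (heq x).symm)

lemma ID_umul {d : ℝ} (hd : 0 < d) :
    Tendsto (fun u : ℝ => u * Real.exp (-(d*u))) atTop (nhds 0) := by
  have h1 := (tendsto_pow_mul_exp_neg_atTop_nhds_zero 1).comp
    (tendsto_id.const_mul_atTop hd (f := fun u : ℝ => u))
  have h2 := h1.const_mul (1/d)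
  rw [mul_zero] at h2
  refine h2.congr (fun u => ?_)
  simp only [Function.comp, pow_one]
  field_simp

lemma ID_lim3 {a b e d : ℝ} (ha : 0 < a) (hb : 0 < b) (hd : 0 < d) :
    Tendsto (fun x : ℝ => (a + b*x^2)/a * Real.exp (-e - d*(x^2 - x + 1/3))) atTop (nhds 0) := by
  have hd2 : 0 < d/2 := half_pos hd
  have hE1 : Tendsto (fun u : ℝ => Real.exp (-(d/2 * u))) atTop (nhds 0) := by
    apply Real.tendsto_exp_atBot.comp
    exact tendsto_neg_atTop_atBot.comp (tendsto_id.const_mul_atTop hd2)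
  have hE2 : Tendsto (fun u : ℝ => u * Real.exp (-(d/2 * u))) atTop (nhds 0) := ID_umul hd2
  have hq : Tendsto (fun u : ℝ => (a + b*u)/a * (Real.exp (-e) * Real.exp (-(d/2 * u))))
      atTop (nhds 0) := by
    have h0 : Tendsto (fun u : ℝ =>
        (Real.exp (-e)/a) * (a * Real.exp (-(d/2 * u)) + b * (u * Real.exp (-(d/2 * u)))))
        atTop (nhds ((Real.exp (-e)/a) * (a * 0 + b * 0))) :=
      (((hE1.const_mul a).add (hE2.const_mul b)).const_mul _)
    simp only [mul_zero, add_zero] at h0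
    refine h0.congr (fun u => ?_)
    field_simp
  have hcomp := hq.comp (tendsto_pow_atTop (n := 2) two_ne_zero)
  refine squeeze_zero_norm' ?_ hcomp
  filter_upwards [eventually_ge_atTop (2:ℝ)] with x hx
  have hpos : 0 < (a + b*x^2)/a := by positivity
  rw [Real.norm_eq_abs, abs_of_pos (by positivity)]
  simp only [Function.comp]
  apply mul_le_mul_of_nonneg_left _ hpos.le
  rw [← Real.exp_add]
  apply Real.exp_le_exp.2
  nlinarith [sq_nonneg (x - 2)]

lemma ID_main_atTop {c k : ℝ} (hc : 0 < c) (hk : 0 < k) :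
    Tendsto (fun x => 2 * Real.exp (-2 * IDW c k x) * (∫ y in Iic x, IDE c k y) * IDP c k x)
      atTop (nhds 1) := by
  have h2k : 0 < 2 * k := by linarith
  have hL : Tendsto (fun x : ℝ => 1 - Real.exp (-(2*c) - 2*k*(x^2 - x + 1/3))) atTop (nhds 1) := by
    have := (tendsto_const_nhds (x := (1:ℝ)) (f := atTop)).sub
      (ID_exp_lim (a := 2*c) h2k ID_q_atTop)
    rw [sub_zero] at this
    exact this.congr (fun x => by ring_nf)
  have hU : Tendsto (fun x : ℝ => (c + k*x^2)/c * Real.exp (-(2*c) - 2*k*(x^2 - x + 1/3))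
      + (c + k*x^2)/(c + k*(x-1)^2)) atTop (nhds 1) := by
    have := (ID_lim3 (e := 2*c) (d := 2*k) hc hk h2k).add
      (ID_ratio_lim hc hk tendsto_abs_atTop_atTop)
    rw [zero_add] at this
    exact this
  apply tendsto_of_tendsto_of_tendsto_of_le_of_le' hL hU
  · -- lower bound
    filter_upwards [eventually_ge_atTop (2:ℝ)] with x hx
    set e := Real.exp (-2 * IDW c k x) with he_def
    have he : 0 < e := Real.exp_pos _
    have heEix : e * IDE c k x = 1 := by
      have h0 : -2 * IDW c k x + 2 * IDW c k x = 0 := by ring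
      rw [he_def, IDE, ← Real.exp_add, h0, Real.exp_zero]
    have heEix1 : e * IDE c k (x-1) = Real.exp (-(2*c) - 2*k*(x^2 - x + 1/3)) := by
      rw [he_def, IDE, ← Real.exp_add]
      congr 1
      simp only [IDW]; ring
    have hPx : 0 < IDP c k x := by simp only [IDP]; nlinarith [sq_nonneg x]
    have hPle : ∀ y ∈ Icc (x-1) x, IDP c k y ≤ IDP c k x := by
      intro y hy
      simp only [IDP]
      have h1 := hy.1; have h2 := hy.2
      nlinarith [mul_nonneg hk.le (mul_nonneg (sub_nonneg.2 h2) (by linarith : (0:ℝ) ≤ x + y))]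
    have hIg := ID_interval_ge (by linarith : x - 1 ≤ x) hPx hPle
    have hg0 := ID_g_nonneg c k (x-1)
    have hgs := ID_g_split hc hk.le x
    rw [div_le_iff₀ (by linarith : (0:ℝ) < 2 * IDP c k x)] at hIg
    rw [hgs, ← heEix1]
    set g1 := ∫ y in Iic (x-1), IDE c k y
    set I := ∫ y in (x-1)..x, IDE c k y
    nlinarith [mul_le_mul_of_nonneg_left hIg he.le,
      mul_nonneg (mul_nonneg he.le hg0) hPx.le]
  · -- upper bound
    filter_upwards [eventually_ge_atTop (2:ℝ)] with x hx
    set e := Real.exp (-2 * IDW c k x) with he_def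
    have he : 0 < e := Real.exp_pos _
    have heEix : e * IDE c k x = 1 := by
      have h0 : -2 * IDW c k x + 2 * IDW c k x = 0 := by ring
      rw [he_def, IDE, ← Real.exp_add, h0, Real.exp_zero]
    have heEix1 : e * IDE c k (x-1) = Real.exp (-(2*c) - 2*k*(x^2 - x + 1/3)) := by
      rw [he_def, IDE, ← Real.exp_add]
      congr 1
      simp only [IDW]; ring
    have hPx : 0 < IDP c k x := by simp only [IDP]; nlinarith [sq_nonneg x]
    have hP1 : 0 < IDP c k (x-1) := by simp only [IDP]; nlinarith [sq_nonneg (x-1)]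
    have hPge : ∀ y ∈ Icc (x-1) x, IDP c k (x-1) ≤ IDP c k y := by
      intro y hy
      simp only [IDP]
      have h1 := hy.1; have h2 := hy.2
      nlinarith [mul_nonneg hk.le (mul_nonneg (sub_nonneg.2 h1) (by linarith : (0:ℝ) ≤ y + (x-1)))]
    have hIle := ID_interval_le (by linarith : x - 1 ≤ x) hP1 hPge
    have hgle : ∫ y in Iic (x-1), IDE c k y ≤ IDE c k (x-1) / (2 * c) := by
      apply ID_g_le hc hk.le hc
      intro y _
      simp only [IDP]
      nlinarith [sq_nonneg y]
    have hgs := ID_g_split hc hk.le x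
    have hEx1pos := IDE_pos c k (x-1)
    have hExpos := IDE_pos c k x
    rw [le_div_iff₀ (by linarith : (0:ℝ) < 2 * IDP c k (x-1))] at hIle
    rw [le_div_iff₀ (by linarith : (0:ℝ) < 2 * c)] at hgle
    rw [hgs]
    set g1 := ∫ y in Iic (x-1), IDE c k y with hg1_def
    set I := ∫ y in (x-1)..x, IDE c k y with hI_def
    have hgoal : 2 * e * (g1 + I) * IDP c k x
        ≤ IDP c k x / c * (e * IDE c k (x-1)) + IDP c k x / IDP c k (x-1) := by
      rw [div_mul_eq_mul_div, div_add_div _ _ hc.ne' hP1.ne',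
        le_div_iff₀ (by positivity)]
      have hgI0 : 0 ≤ I :=
        intervalIntegral.integral_nonneg (by linarith) (fun y _ => (IDE_pos c k y).le)
      nlinarith [mul_le_mul_of_nonneg_left hgle (mul_nonneg (mul_nonneg he.le hP1.le) hPx.le),
        mul_le_mul_of_nonneg_left hIle (mul_nonneg (mul_nonneg he.le hc.le) hPx.le),
        mul_nonneg (mul_nonneg (mul_nonneg he.le hc.le) hPx.le) hEx1pos.le,
        mul_pos (mul_pos he hc) hPx]
    calc 2 * e * (g1 + I) * IDP c k x
        ≤ IDP c k x / c * (e * IDE c k (x-1)) + IDP c k x / IDP c k (x-1) := hgoal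
      _ = (c + k*x^2)/c * Real.exp (-(2*c) - 2*k*(x^2 - x + 1/3))
          + (c + k*x^2)/(c + k*(x-1)^2) := by rw [heEix1]; simp only [IDP]

lemma ID_main_atBot {c k : ℝ} (hc : 0 < c) (hk : 0 < k) :
    Tendsto (fun x => 2 * Real.exp (-2 * IDW c k x) * (∫ y in Iic x, IDE c k y) * IDP c k x)
      atBot (nhds 1) := by
  have h2k : 0 < 2 * k := by linarith
  have hL : Tendsto (fun x : ℝ => (c + k*x^2)/(c + k*(x-1)^2)
      * (1 - Real.exp (-(2*c) - 2*k*(x^2 - x + 1/3)))) atBot (nhds 1) := by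
    have h1 := (tendsto_const_nhds (x := (1:ℝ)) (f := atBot)).sub
      (ID_exp_lim (a := 2*c) h2k ID_q_atBot)
    rw [sub_zero] at h1
    have := (ID_ratio_lim hc hk tendsto_abs_atBot_atTop).mul h1
    rw [mul_one] at this
    exact this
  apply tendsto_of_tendsto_of_tendsto_of_le_of_le' hL
    (tendsto_const_nhds (x := (1:ℝ)) (f := atBot))
  · -- lower bound
    filter_upwards [eventually_le_atBot (-1:ℝ)] with x hx
    set e := Real.exp (-2 * IDW c k x) with he_def
    have he : 0 < e := Real.exp_pos _
    have heEix : e * IDE c k x = 1 := by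
      have h0 : -2 * IDW c k x + 2 * IDW c k x = 0 := by ring
      rw [he_def, IDE, ← Real.exp_add, h0, Real.exp_zero]
    have heEix1 : e * IDE c k (x-1) = Real.exp (-(2*c) - 2*k*(x^2 - x + 1/3)) := by
      rw [he_def, IDE, ← Real.exp_add]
      congr 1
      simp only [IDW]; ring
    have hPx : 0 < IDP c k x := by simp only [IDP]; nlinarith [sq_nonneg x]
    have hP1 : 0 < IDP c k (x-1) := by simp only [IDP]; nlinarith [sq_nonneg (x-1)]
    have hPle : ∀ y ∈ Icc (x-1) x, IDP c k y ≤ IDP c k (x-1) := by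
      intro y hy
      simp only [IDP]
      have h1 := hy.1; have h2 := hy.2
      nlinarith [mul_nonneg hk.le (mul_nonneg (sub_nonneg.2 h1)
        (by linarith : (0:ℝ) ≤ -(y + (x-1))))]
    have hIg := ID_interval_ge (by linarith : x - 1 ≤ x) hP1 hPle
    have hg0 := ID_g_nonneg c k (x-1)
    have hgs := ID_g_split hc hk.le x
    rw [div_le_iff₀ (by linarith : (0:ℝ) < 2 * IDP c k (x-1))] at hIg
    rw [hgs, ← heEix1]
    have hPdef : (c + k*x^2) = IDP c k x := rfl
    have hP1def : (c + k*(x-1)^2) = IDP c k (x-1) := rfl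
    rw [hPdef, hP1def, div_mul_eq_mul_div, div_le_iff₀ hP1]
    set g1 := ∫ y in Iic (x-1), IDE c k y
    set I := ∫ y in (x-1)..x, IDE c k y
    have hX : IDP c k x * (e * IDE c k x) = IDP c k x := by rw [heEix, mul_one]
    nlinarith [mul_le_mul_of_nonneg_left hIg (mul_nonneg he.le hPx.le),
      mul_nonneg (mul_nonneg (mul_nonneg he.le hg0) hPx.le) hP1.le]
  · -- upper bound
    filter_upwards [eventually_le_atBot (-1:ℝ)] with x hx
    set e := Real.exp (-2 * IDW c k x) with he_def
    have he : 0 < e := Real.exp_pos _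
    have heEix : e * IDE c k x = 1 := by
      have h0 : -2 * IDW c k x + 2 * IDW c k x = 0 := by ring
      rw [he_def, IDE, ← Real.exp_add, h0, Real.exp_zero]
    have hPx : 0 < IDP c k x := by simp only [IDP]; nlinarith [sq_nonneg x]
    have hgle : ∫ y in Iic x, IDE c k y ≤ IDE c k x / (2 * IDP c k x) := by
      apply ID_g_le hc hk.le hPx
      intro y hy
      simp only [IDP]
      nlinarith [mul_nonneg hk.le (mul_nonneg (sub_nonneg.2 hy)
        (by linarith : (0:ℝ) ≤ -(x + y)))]
    rw [le_div_iff₀ (by linarith : (0:ℝ) < 2 * IDP c k x)] at hgle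
    nlinarith [mul_le_mul_of_nonneg_left hgle he.le]


/-- With `V x = λ √E x + E^{3/2} x³/3`, `λ > 0`, `E ≥ 1`, and
`f x = 2 e^{-2V x} ∫_{-∞}^x e^{2V y} dy`, one has `f x ~ 1/V' x = 1/(λ √E + E^{3/2} x²)`
as `x → ±∞`, i.e. `f x * V' x → 1` as `x → +∞` and as `x → -∞`. -/
theorem invariant_density_asymptotics (lam E : ℝ) (hlam : 0 < lam) (hE : 1 ≤ E)
    (V f : ℝ → ℝ)
    (hV : ∀ x, V x = lam * Real.sqrt E * x + E ^ ((3:ℝ)/2) * x ^ 3 / 3)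
    (hf : ∀ x, f x = 2 * Real.exp (-2 * V x) * ∫ y in Iic x, Real.exp (2 * V y)) :
    Tendsto (fun x => f x * (lam * Real.sqrt E + E ^ ((3:ℝ)/2) * x ^ 2)) atTop (nhds 1) ∧
    Tendsto (fun x => f x * (lam * Real.sqrt E + E ^ ((3:ℝ)/2) * x ^ 2)) atBot (nhds 1) := by
  have hc : 0 < lam * Real.sqrt E := mul_pos hlam (Real.sqrt_pos.2 (by linarith))
  have hk : 0 < E ^ ((3:ℝ)/2) := Real.rpow_pos_of_pos (by linarith) _
  have hfun : (fun x => f x * (lam * Real.sqrt E + E ^ ((3:ℝ)/2) * x ^ 2))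
      = (fun x => 2 * Real.exp (-2 * IDW (lam * Real.sqrt E) (E ^ ((3:ℝ)/2)) x)
        * (∫ y in Iic x, IDE (lam * Real.sqrt E) (E ^ ((3:ℝ)/2)) y)
        * IDP (lam * Real.sqrt E) (E ^ ((3:ℝ)/2)) x) := by
    funext x
    rw [hf x]
    simp only [hV, IDE, IDW, IDP]
  rw [hfun]
  exact ⟨ID_main_atTop hc hk, ID_main_atBot hc hk⟩
end

section
/- For λ ∈ ℝ and E ≥ 1, let m = (√(2π)/E) ∫₀^∞ u^{-1/2} exp(-2λu - u³/6) du. Then m ~ π/(√λ E) as λ → +∞ (with E fixed); in particular for E = 1, m_λ ~ π/√λ as λ → ∞. -/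
open MeasureTheory Real Set Filter

-- dominating / limit function
noncomputable def bnd (v : ℝ) : ℝ := (1 / Real.sqrt v) * Real.exp (-2 * v)

lemma bnd_integrable : IntegrableOn bnd (Ioi (0:ℝ)) := by
  have h := Real.GammaIntegral_convergent (s := 1/2) (by norm_num)
  have h2 : IntegrableOn (fun x : ℝ => Real.exp (-(2*x)) * (2*x) ^ ((1:ℝ)/2 - 1)) (Ioi 0) := by
    have := (integrableOn_Ioi_comp_mul_left_iff
      (fun x : ℝ => Real.exp (-x) * x ^ ((1:ℝ)/2 - 1)) 0 (a := 2) (by norm_num)).2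
    simpa using this (by simpa using h)
  have h3 : IntegrableOn
      (fun x : ℝ => ((2:ℝ) ^ ((1:ℝ)/2 - 1))⁻¹ * (Real.exp (-(2*x)) * (2*x) ^ ((1:ℝ)/2 - 1)))
      (Ioi 0) := h2.const_mul _
  refine h3.congr_fun ?_ measurableSet_Ioi
  intro x hx
  have hx0 : (0:ℝ) < x := hx
  show ((2:ℝ) ^ ((1:ℝ)/2 - 1))⁻¹ * (Real.exp (-(2*x)) * ((2:ℝ)*x) ^ ((1:ℝ)/2 - 1)) = bnd x
  have hmul : ((2:ℝ)*x) ^ ((1:ℝ)/2 - 1) = 2 ^ ((1:ℝ)/2 - 1) * x ^ ((1:ℝ)/2 - 1) :=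
    Real.mul_rpow (by norm_num) hx0.le
  rw [hmul, bnd]
  have hxr : x ^ ((1:ℝ)/2 - 1) = 1 / Real.sqrt x := by
    rw [show (1:ℝ)/2 - 1 = -(1/2) by norm_num, Real.rpow_neg hx0.le,
      ← Real.sqrt_eq_rpow, one_div]
  rw [hxr]
  have hc : ((2:ℝ) ^ ((1:ℝ)/2 - 1)) ≠ 0 := (Real.rpow_pos_of_pos two_pos _).ne'
  field_simp

lemma bnd_integral : ∫ v in Ioi (0:ℝ), bnd v = Real.sqrt (π / 2) := by
  have h := integral_comp_mul_left_Ioi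
    (fun x : ℝ => Real.exp (-x) * x ^ ((1:ℝ)/2 - 1)) 0 (b := 2) (by norm_num)
  have hG : ∫ x in Ioi (0:ℝ), Real.exp (-x) * x ^ ((1:ℝ)/2 - 1) = Real.sqrt π := by
    rw [← Real.Gamma_eq_integral (by norm_num : (0:ℝ) < 1/2), Real.Gamma_one_half_eq]
  rw [mul_zero] at h
  rw [hG] at h
  -- h : ∫ x in Ioi 0, exp (-(2*x)) * (2*x)^(-1/2) = 2⁻¹ • √π
  have key : ∫ x in Ioi (0:ℝ), Real.exp (-(2*x)) * (2*x) ^ ((1:ℝ)/2 - 1)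
      = 2⁻¹ * Real.sqrt π := by simpa using h
  have congr1 : ∫ x in Ioi (0:ℝ), Real.exp (-(2*x)) * (2*x) ^ ((1:ℝ)/2 - 1)
      = ∫ x in Ioi (0:ℝ), ((2:ℝ) ^ ((1:ℝ)/2 - 1)) * bnd x := by
    refine setIntegral_congr_fun measurableSet_Ioi (fun x hx => ?_)
    have hx0 : (0:ℝ) < x := hx
    have : ((2:ℝ)*x) ^ ((1:ℝ)/2 - 1) = 2 ^ ((1:ℝ)/2 - 1) * x ^ ((1:ℝ)/2 - 1) :=
      Real.mul_rpow (by norm_num) hx0.le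
    have hxr : x ^ ((1:ℝ)/2 - 1) = 1 / Real.sqrt x := by
      rw [show (1:ℝ)/2 - 1 = -(1/2) by norm_num, Real.rpow_neg hx0.le,
        ← Real.sqrt_eq_rpow, one_div]
    rw [this, hxr, bnd]
    ring_nf
  rw [congr1, integral_const_mul] at key
  have h2 : ((2:ℝ) ^ ((1:ℝ)/2 - 1)) = (Real.sqrt 2)⁻¹ := by
    rw [show (1:ℝ)/2 - 1 = -(1/2) by norm_num, Real.rpow_neg (by norm_num),
      ← Real.sqrt_eq_rpow]
  rw [h2] at key
  have hs2 : (0:ℝ) < Real.sqrt 2 := Real.sqrt_pos.2 (by norm_num)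
  have : ∫ v in Ioi (0:ℝ), bnd v = Real.sqrt 2 * (2⁻¹ * Real.sqrt π) := by
    field_simp at key ⊢
    linarith [key]
  rw [this, Real.sqrt_div pi_pos.le]
  have m : Real.sqrt 2 * Real.sqrt 2 = 2 := Real.mul_self_sqrt (by norm_num)
  field_simp
  nlinarith [m, Real.sqrt_nonneg π]


lemma key_tendsto : Tendsto (fun lam : ℝ => Real.sqrt lam *
    ∫ u in Ioi (0:ℝ), (1 / Real.sqrt u) * Real.exp (-2 * lam * u - u ^ 3 / 6))
    atTop (nhds (Real.sqrt (π / 2))) := by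
  have hG : Tendsto (fun lam : ℝ => ∫ v in Ioi (0:ℝ),
      (1 / Real.sqrt v) * Real.exp (-2 * v - v ^ 3 / (6 * lam ^ 3))) atTop
      (nhds (∫ v in Ioi (0:ℝ), bnd v)) := by
    apply tendsto_integral_filter_of_dominated_convergence bnd
    · filter_upwards with lam
      apply Measurable.aestronglyMeasurable
      fun_prop
    · filter_upwards [eventually_gt_atTop (0:ℝ)] with lam hlam
      filter_upwards [ae_restrict_mem measurableSet_Ioi] with v hv
      have hv0 : (0:ℝ) < v := hv
      have h1 : (0:ℝ) ≤ 1 / Real.sqrt v := by positivity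
      rw [Real.norm_eq_abs, abs_of_nonneg (by positivity)]
      rw [bnd]
      refine mul_le_mul_of_nonneg_left ?_ h1
      apply Real.exp_le_exp.2
      have : (0:ℝ) ≤ v ^ 3 / (6 * lam ^ 3) := by positivity
      linarith
    · exact bnd_integrable
    · filter_upwards [ae_restrict_mem measurableSet_Ioi] with v hv
      have hv0 : (0:ℝ) < v := hv
      rw [bnd]
      refine Tendsto.const_mul _ ?_
      refine (Real.continuous_exp.tendsto _).comp ?_
      have h6 : Tendsto (fun lam : ℝ => 6 * lam ^ 3) atTop atTop :=
        (tendsto_pow_atTop (by norm_num)).const_mul_atTop (by norm_num)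
      have hinv : Tendsto (fun lam : ℝ => v ^ 3 / (6 * lam ^ 3)) atTop (nhds 0) := by
        simp only [div_eq_mul_inv]
        simpa using (h6.inv_tendsto_atTop).const_mul (v ^ 3)
      have := (tendsto_const_nhds (x := -2 * v) (f := atTop (α := ℝ))).sub hinv
      simpa using this
  have heq : ∀ᶠ lam : ℝ in atTop,
      (fun lam : ℝ => ∫ v in Ioi (0:ℝ),
        (1 / Real.sqrt v) * Real.exp (-2 * v - v ^ 3 / (6 * lam ^ 3))) lam
      = Real.sqrt lam *
        ∫ u in Ioi (0:ℝ), (1 / Real.sqrt u) * Real.exp (-2 * lam * u - u ^ 3 / 6) := by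
    filter_upwards [eventually_gt_atTop (0:ℝ)] with lam hlam
    have h := integral_comp_mul_left_Ioi
      (fun v => (1 / Real.sqrt v) * Real.exp (-2 * v - v ^ 3 / (6 * lam ^ 3))) 0 hlam
    rw [mul_zero, smul_eq_mul] at h
    have congr2 : ∫ u in Ioi (0:ℝ),
        (fun v => (1 / Real.sqrt v) * Real.exp (-2 * v - v ^ 3 / (6 * lam ^ 3))) (lam * u)
        = ∫ u in Ioi (0:ℝ),
          (Real.sqrt lam)⁻¹ * ((1 / Real.sqrt u) * Real.exp (-2 * lam * u - u ^ 3 / 6)) := by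
      refine setIntegral_congr_fun measurableSet_Ioi (fun u hu => ?_)
      have hu0 : (0:ℝ) < u := hu
      show (1 / Real.sqrt (lam * u)) * Real.exp (-2 * (lam * u) - (lam * u) ^ 3 / (6 * lam ^ 3))
        = (Real.sqrt lam)⁻¹ * ((1 / Real.sqrt u) * Real.exp (-2 * lam * u - u ^ 3 / 6))
      rw [Real.sqrt_mul hlam.le]
      have harg : -2 * (lam * u) - (lam * u) ^ 3 / (6 * lam ^ 3) = -2 * lam * u - u ^ 3 / 6 := by
        field_simp
      rw [harg, one_div, mul_inv, one_div]
      ring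
    rw [congr2, integral_const_mul] at h
    have hmm : Real.sqrt lam * Real.sqrt lam = lam := Real.mul_self_sqrt hlam.le
    have hs : (0:ℝ) < Real.sqrt lam := Real.sqrt_pos.2 hlam
    have h2 := congrArg (fun x => lam * x) h
    simp only [← mul_assoc] at h2
    rw [mul_inv_cancel₀ hlam.ne', one_mul] at h2
    have hfac : lam * (Real.sqrt lam)⁻¹ = Real.sqrt lam := by
      rw [← hmm]; field_simp
      rw [Real.sqrt_sq hs.le]
    rw [hfac] at h2
    exact h2.symm
  rw [bnd_integral] at hG
  exact Tendsto.congr' heq hG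

/-- For `E ≥ 1`, let
`m λ = (√(2π)/E) ∫₀^∞ u^{-1/2} exp (-2λu - u³/6) du`.  Then `m λ ~ π/(√λ E)` as
`λ → +∞` (with `E` fixed), i.e. `m λ * √λ * E → π`; in particular for `E = 1`,
`m λ ~ π/√λ` as `λ → ∞`, i.e. `m λ * √λ → π`. -/
theorem rotation_time_asymptotics (E : ℝ) (hE : 1 ≤ E) :
    (Tendsto
      (fun lam : ℝ =>
        ((Real.sqrt (2 * π) / E) *
            ∫ u in Ioi (0:ℝ), (1 / Real.sqrt u) * Real.exp (-2 * lam * u - u ^ 3 / 6))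
          * (Real.sqrt lam * E))
      atTop (nhds π)) ∧
    (Tendsto
      (fun lam : ℝ =>
        ((Real.sqrt (2 * π) / 1) *
            ∫ u in Ioi (0:ℝ), (1 / Real.sqrt u) * Real.exp (-2 * lam * u - u ^ 3 / 6))
          * Real.sqrt lam)
      atTop (nhds π)) := by
  have main : ∀ E : ℝ, 1 ≤ E → Tendsto
      (fun lam : ℝ =>
        ((Real.sqrt (2 * π) / E) *
            ∫ u in Ioi (0:ℝ), (1 / Real.sqrt u) * Real.exp (-2 * lam * u - u ^ 3 / 6))
          * (Real.sqrt lam * E))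
      atTop (nhds π) := by
    intro E hE
    have hE0 : E ≠ 0 := by linarith
    have h1 : Tendsto (fun lam : ℝ => Real.sqrt (2 * π) * (Real.sqrt lam *
        ∫ u in Ioi (0:ℝ), (1 / Real.sqrt u) * Real.exp (-2 * lam * u - u ^ 3 / 6)))
        atTop (nhds (Real.sqrt (2 * π) * Real.sqrt (π / 2))) := key_tendsto.const_mul _
    have hval : Real.sqrt (2 * π) * Real.sqrt (π / 2) = π := by
      rw [← Real.sqrt_mul (by positivity)]
      have : 2 * π * (π / 2) = π ^ 2 := by ring
      rw [this, Real.sqrt_sq pi_pos.le]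
    rw [hval] at h1
    refine h1.congr (fun lam => ?_)
    field_simp
  exact ⟨main E hE, by simpa using main 1 le_rfl⟩
end

section
/- For V(x) = λ√E x + E^{3/2}x³/3 with λ ∈ ℝ, E ≥ 1, and f(x) = 2e^{-2V(x)}∫_{-∞}^x e^{2V(y)} dy, one has lim_{A→∞} ∫_{-A}^{A} 2x f(x) dx = ∫₀^∞ u e^{-2λ√E u - (E^{3/2}/6)u³} (∫_{-∞}^{∞} e^{-(E^{3/2}/2) u v²} dv) du = (√(2π)/E^{3/4}) ∫₀^∞ √u e^{-2λ√E u - (E^{3/2}/6) u³} du. -/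
open MeasureTheory Real Set Filter

set_option maxHeartbeats 1000000

lemma aux_u_le (ε : ℝ) (hε : 0 < ε) (u : ℝ) (hu : 0 ≤ u) : u ≤ ε * u^3 + 1 / Real.sqrt ε := by
  rcases le_or_gt u (1 / Real.sqrt ε) with h | h
  · nlinarith [mul_nonneg (mul_nonneg hε.le (mul_nonneg hu hu)) hu]
  · have hs : 0 < Real.sqrt ε := Real.sqrt_pos.2 hε
    have h2 : Real.sqrt ε * Real.sqrt ε = ε := Real.mul_self_sqrt hε.le
    have h0u : 0 < u := lt_trans (by positivity) h
    have h1 : 1 < Real.sqrt ε * u := by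
      rw [div_lt_iff₀ hs] at h; linarith
    have h3 : 1 * 1 ≤ (Real.sqrt ε * u) * (Real.sqrt ε * u) :=
      mul_le_mul h1.le h1.le zero_le_one (by positivity)
    have h4 : u * (1*1) ≤ u * ((Real.sqrt ε * u) * (Real.sqrt ε * u)) :=
      mul_le_mul_of_nonneg_left h3 hu
    have h5 : u * ((Real.sqrt ε * u) * (Real.sqrt ε * u)) = ε * u ^ 3 := by
      rw [show (Real.sqrt ε * u) * (Real.sqrt ε * u) = (Real.sqrt ε * Real.sqrt ε) * (u*u) by ring,
        h2]; ring
    nlinarith [hs, one_div_pos.2 hs]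

lemma integrable_cubic_exp (b k : ℝ) (hk : 0 < k) :
    IntegrableOn (fun u => Real.exp (b * u - k * u ^ 3)) (Ioi (0:ℝ)) := by
  set B := |b| + 1 with hB
  have hB0 : 0 < B := by positivity
  set C : ℝ := B / Real.sqrt (k / B) with hC
  have hbound : ∀ u ∈ Ioi (0:ℝ),
      ‖Real.exp (b * u - k * u ^ 3)‖ ≤ Real.exp C * Real.exp (-1 * u) := by
    intro u hu
    have hu0 : (0:ℝ) ≤ u := (le_of_lt hu)
    rw [Real.norm_eq_abs, Real.abs_exp, ← Real.exp_add]
    apply Real.exp_le_exp.2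
    have key := aux_u_le (k / B) (by positivity) u hu0
    have key2 : B * u ≤ k * u^3 + C := by
      have := mul_le_mul_of_nonneg_left key hB0.le
      rw [mul_add] at this
      calc B * u ≤ B * ((k / B) * u ^ 3) + B * (1 / Real.sqrt (k / B)) := this
        _ = k * u^3 + B / Real.sqrt (k/B) := by field_simp
        _ = k * u^3 + C := by rw [hC]
    have hb1 : b * u ≤ (|b|) * u := mul_le_mul_of_nonneg_right (le_abs_self b) hu0
    have hBu : b * u + u ≤ B * u := by rw [hB]; nlinarith
    linarith
  exact Integrable.mono' ((exp_neg_integrableOn_Ioi 0 zero_lt_one).const_mul (Real.exp C))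
    ((Continuous.aestronglyMeasurable (by continuity)).restrict)
    ((ae_restrict_iff' measurableSet_Ioi).2 (Eventually.of_forall hbound))

lemma iic_shift (g : ℝ → ℝ) (x : ℝ) : (∫ y in Iic x, g y) = ∫ u in Ioi (0:ℝ), g (x - u) := by
  have h1 : (∫ u in Ioi (0:ℝ), g (x - u)) = ∫ t in Iic (-(0:ℝ)), g (x + t) := by
    rw [← integral_comp_neg_Ioi]
    simp [sub_eq_add_neg]
  have h2 : (∫ t in Iic (0:ℝ), g (x + t)) = ∫ y in Iic x, g y := by
    have := (measurePreserving_add_right (volume : Measure ℝ) x).setIntegral_preimage_emb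
      (Homeomorph.addRight x).measurableEmbedding g (Iic x)
    have hpre : (fun t => t + x) ⁻¹' (Iic x) = Iic 0 := by
      ext t; simp [Set.mem_Iic]
    rw [hpre] at this
    rw [← this]; congr 1; ext t; rw [add_comm]
  rw [h1, neg_zero, h2]

lemma gauss_odd_zero {m : ℝ} : (∫ v : ℝ, v * Real.exp (-m * v^2)) = 0 := by
  have h := MeasureTheory.integral_neg_eq_self (fun v : ℝ => v * Real.exp (-m * v^2)) volume
  simp only [neg_mul, neg_sq] at h
  have : (∫ v : ℝ, -(v * Real.exp (-m * v^2))) = ∫ v : ℝ, v * Real.exp (-m * v^2) := by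
    convert h using 2 with v <;> funext w <;> ring_nf
  rw [integral_neg] at this
  linarith

lemma I2_val (m p q : ℝ) (hm : 0 < m) :
    (∫ v in p..q, v * Real.exp (-m * v^2))
      = (Real.exp (-m * p^2) - Real.exp (-m * q^2)) / (2*m) := by
  have hder : ∀ v : ℝ, HasDerivAt (fun w => -(2*m)⁻¹ * Real.exp (-m * w^2))
      (v * Real.exp (-m * v^2)) v := by
    intro v
    have h1 : HasDerivAt (fun w : ℝ => -m * w^2) (-m * (2*v)) v := by
      simpa using (((hasDerivAt_pow 2 v)).const_mul (-m))
    have h2 := (Real.hasDerivAt_exp (-m * v^2)).comp v h1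
    have h3 := h2.const_mul (-(2*m)⁻¹)
    refine h3.congr_deriv ?_
    field_simp
  rw [intervalIntegral.integral_eq_sub_of_hasDerivAt (fun v _ => hder v)
    ((Continuous.intervalIntegrable (by continuity) p q))]
  field_simp
  ring

lemma sqrt_pi_div (c u : ℝ) (hc : 0 < c) (hu : 0 < u) :
    u * Real.sqrt (π / (c/2*u)) = Real.sqrt (2*π/c) * Real.sqrt u := by
  have h1 : π / (c/2*u) = (2*π/c)/u := by field_simp
  rw [h1, Real.sqrt_div (by positivity) u, mul_div_assoc', mul_comm u, mul_div_assoc,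
    Real.div_sqrt]

lemma G_tendsto (c u : ℝ) (hc : 0 < c) (hu : 0 < u) :
    Tendsto (fun A : ℝ => ∫ v in (-(2*A)-u)..(2*A-u), (v+u) * Real.exp (-(c/2)*u*v^2)) atTop
      (nhds (u * ∫ v : ℝ, Real.exp (-(c/2)*u*v^2))) := by
  have hm : 0 < c/2*u := by positivity
  have hrw : ∀ v : ℝ, -(c/2)*u*v^2 = -(c/2*u)*v^2 := fun v => by ring
  simp only [hrw]
  have hint1 := integrable_mul_exp_neg_mul_sq hm
  have hint2 := integrable_exp_neg_mul_sq hm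
  have hfeq : (fun v : ℝ => (v+u) * Real.exp (-(c/2*u) * v^2))
      = fun v : ℝ => v * Real.exp (-(c/2*u) * v^2) + u * Real.exp (-(c/2*u) * v^2) := by
    funext v; ring
  have hint : Integrable (fun v : ℝ => (v+u) * Real.exp (-(c/2*u) * v^2)) := by
    rw [hfeq]; exact hint1.add (hint2.const_mul u)
  have hval : (∫ v : ℝ, (v+u) * Real.exp (-(c/2*u) * v^2))
      = u * ∫ v : ℝ, Real.exp (-(c/2*u) * v^2) := by
    rw [hfeq, integral_add hint1 (hint2.const_mul u), gauss_odd_zero, integral_const_mul, zero_add]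
  have hb : Tendsto (fun A : ℝ => 2*A-u) atTop atTop := by
    apply tendsto_atTop_add_const_right
    exact (tendsto_id.const_mul_atTop two_pos)
  have ha : Tendsto (fun A : ℝ => -(2*A)-u) atTop atBot := by
    apply tendsto_atBot_add_const_right
    simp only [← neg_mul]
    exact (tendsto_id.const_mul_atTop_of_neg (by norm_num))
  have := intervalIntegral_tendsto_integral hint ha hb
  rwa [hval] at this

lemma G_bound (c u A : ℝ) (hc : 1 ≤ c) (hu : 0 < u) (hA : 1 ≤ A) :
    |∫ v in (-(2*A)-u)..(2*A-u), (v+u) * Real.exp (-(c/2)*u*v^2)|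
      ≤ Real.sqrt (2*π/c) * Real.sqrt u + 8/c := by
  have hc0 : (0:ℝ) < c := lt_of_lt_of_le one_pos hc
  have hm : 0 < c/2*u := by positivity
  have hrw : ∀ v : ℝ, -(c/2)*u*v^2 = -(c/2*u)*v^2 := fun v => by ring
  simp only [hrw]
  set m := c/2*u with hmdef
  set p := -(2*A)-u with hp
  set q := 2*A-u with hq
  clear_value m p q
  have hpq : p ≤ q := by rw [hp, hq]; linarith
  have hi1 : IntervalIntegrable (fun v => v * Real.exp (-m * v^2)) volume p q :=
    (Continuous.intervalIntegrable (by continuity) p q)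
  have hi2 : IntervalIntegrable (fun v => u * Real.exp (-m * v^2)) volume p q :=
    (Continuous.intervalIntegrable (by continuity) p q)
  have hsplit : (∫ v in p..q, (v+u) * Real.exp (-m * v^2))
      = (∫ v in p..q, v * Real.exp (-m * v^2)) + ∫ v in p..q, u * Real.exp (-m * v^2) := by
    rw [← intervalIntegral.integral_add hi1 hi2]
    congr 1; funext v; ring
  rw [hsplit]
  refine le_trans (abs_add_le _ _) ?_
  have hterm2 : |∫ v in p..q, u * Real.exp (-m * v^2)| ≤ Real.sqrt (2*π/c) * Real.sqrt u := by
    rw [intervalIntegral.integral_const_mul]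
    have hI1nn : 0 ≤ ∫ v in p..q, Real.exp (-m * v^2) := by
      rw [intervalIntegral.integral_of_le hpq]
      positivity
    have hI1le : (∫ v in p..q, Real.exp (-m * v^2)) ≤ ∫ v : ℝ, Real.exp (-m * v^2) := by
      rw [intervalIntegral.integral_of_le hpq]
      exact setIntegral_le_integral (integrable_exp_neg_mul_sq hm)
        (Eventually.of_forall (fun v => (Real.exp_pos _).le))
    rw [abs_mul, abs_of_pos hu, abs_of_nonneg hI1nn]
    calc u * ∫ v in p..q, Real.exp (-m * v^2) ≤ u * ∫ v : ℝ, Real.exp (-m * v^2) :=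
          mul_le_mul_of_nonneg_left hI1le hu.le
      _ = u * Real.sqrt (π / m) := by rw [integral_gaussian]
      _ = Real.sqrt (2*π/c) * Real.sqrt u := by rw [hmdef]; exact sqrt_pi_div c u hc0 hu
  have hterm1 : |∫ v in p..q, v * Real.exp (-m * v^2)| ≤ 8/c := by
    rw [I2_val m p q hm]
    have hppq : q^2 ≤ p^2 := by rw [hp, hq]; nlinarith
    set s := m * p^2 with hs
    set t := m * q^2 with ht
    clear_value s t
    have hts : t ≤ s := by rw [hs, ht]; exact mul_le_mul_of_nonneg_left hppq hm.le
    have ht0 : 0 ≤ t := by rw [ht]; exact mul_nonneg hm.le (sq_nonneg _)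
    have hexp : Real.exp (-s) ≤ Real.exp (-t) := Real.exp_le_exp.2 (by linarith)
    have habsval : |(Real.exp (-m*p^2) - Real.exp (-m*q^2)) / (2*m)|
        = (Real.exp (-t) - Real.exp (-s)) / (2*m) := by
      rw [show -m*p^2 = -s by rw [hs]; ring, show -m*q^2 = -t by rw [ht]; ring]
      rw [abs_div, abs_of_pos (by positivity : (0:ℝ) < 2*m),
        abs_of_nonpos (by linarith : Real.exp (-s) - Real.exp (-t) ≤ 0)]
      ring_nf
    rw [habsval]
    rcases le_or_gt 1 u with hu1 | hu1
    · have h1 : Real.exp (-t) - Real.exp (-s) ≤ 1 :=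
        le_trans (by linarith [Real.exp_pos (-s)])
          (Real.exp_le_one_iff.2 (by linarith) : Real.exp (-t) ≤ 1)
      have h2 : (Real.exp (-t) - Real.exp (-s)) / (2*m) ≤ 1 / (2*m) :=
        div_le_div_of_nonneg_right h1 (by positivity) |>.trans_eq rfl
      have h3 : 1/(2*m) = 1/(c*u) := by rw [hmdef]; ring_nf
      have h4 : 1/(c*u) ≤ 1/c := by
        apply one_div_le_one_div_of_le hc0
        nlinarith
      have h5 : 1/c ≤ 8/c := by gcongr; norm_num
      linarith
    · have hqA : A ≤ q := by rw [hq]; linarith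
      have hq0 : 0 ≤ q := by linarith
      have htA : m * A^2 ≤ t := by
        rw [ht]; exact mul_le_mul_of_nonneg_left (by nlinarith) hm.le
      have hexpt : Real.exp (-t) ≤ 1/(m*A^2) := by
        have h1 : Real.exp (-t) ≤ Real.exp (-(m*A^2)) := Real.exp_le_exp.2 (by linarith)
        have h2 : m*A^2 ≤ Real.exp (m*A^2) := by
          linarith [Real.add_one_le_exp (m*A^2)]
        have h3 : Real.exp (-(m*A^2)) = 1/Real.exp (m*A^2) := by
          rw [Real.exp_neg]; ring
        rw [h3] at h1
        have h4 : 1/Real.exp (m*A^2) ≤ 1/(m*A^2) :=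
          one_div_le_one_div_of_le (by positivity) h2
        linarith
      have hst : s - t = m*(8*A*u) := by rw [hs, ht, hp, hq]; ring
      have hkey : Real.exp (-t) - Real.exp (-s) ≤ Real.exp (-t) * (s - t) := by
        have h1 : Real.exp (-s) = Real.exp (-t) * Real.exp (-(s-t)) := by
          rw [← Real.exp_add]; congr 1; ring
        have h2 : 1 - (s-t) ≤ Real.exp (-(s-t)) := by
          linarith [Real.add_one_le_exp (-(s-t))]
        nlinarith [Real.exp_pos (-t), (Real.exp_pos (-t)).le]
      have hA0 : (0:ℝ) < A := by linarith
      have hchain : (Real.exp (-t) - Real.exp (-s)) / (2*m)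
          ≤ (1/(m*A^2) * (m*(8*A*u))) / (2*m) := by
        apply div_le_div_of_nonneg_right ?_ (by positivity)
        calc Real.exp (-t) - Real.exp (-s) ≤ Real.exp (-t) * (s-t) := hkey
          _ = Real.exp (-t) * (m*(8*A*u)) := by rw [hst]
          _ ≤ 1/(m*A^2) * (m*(8*A*u)) :=
              mul_le_mul_of_nonneg_right hexpt (by positivity)
      have hval : (1/(m*A^2) * (m*(8*A*u))) / (2*m) = 8/(c*A) := by
        rw [hmdef]; field_simp
      have hfin : 8/(c*A) ≤ 8/c := by
        apply div_le_div_of_nonneg_left (by norm_num) hc0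
        nlinarith
      linarith
  linarith

lemma D_integrable (b c K₁ K₂ : ℝ) (hc : 1 ≤ c) (h1 : 0 ≤ K₁) (h2 : 0 ≤ K₂) :
    IntegrableOn (fun u => (K₁ * Real.sqrt u + K₂) * Real.exp (b*u - c/6*u^3))
      (Ioi (0:ℝ)) := by
  have hint := (integrable_cubic_exp (1 + b) (1/6) (by norm_num)).const_mul (K₁ + K₂)
  refine Integrable.mono' hint ?_ ?_
  · exact ((Continuous.aestronglyMeasurable (by continuity)).restrict)
  · refine (ae_restrict_iff' measurableSet_Ioi).2 (Eventually.of_forall (fun u hu => ?_))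
    have hu0 : (0:ℝ) < u := hu
    have hs : Real.sqrt u ≤ 1 + u := by
      nlinarith [Real.sq_sqrt hu0.le, Real.sqrt_nonneg u, sq_nonneg (Real.sqrt u - 1)]
    have hcoef : K₁ * Real.sqrt u + K₂ ≤ (K₁ + K₂) * (1 + u) := by
      have : K₁ * Real.sqrt u ≤ K₁ * (1 + u) := mul_le_mul_of_nonneg_left hs h1
      nlinarith
    have hcoef2 : (K₁ + K₂) * (1 + u) ≤ (K₁ + K₂) * Real.exp u := by
      apply mul_le_mul_of_nonneg_left _ (by linarith)
      linarith [Real.add_one_le_exp u]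
    have hexp : Real.exp (b*u - c/6*u^3) ≤ Real.exp (b*u - 1/6*u^3) := by
      apply Real.exp_le_exp.2
      nlinarith [pow_pos hu0 3]
    rw [Real.norm_eq_abs, abs_of_nonneg (by positivity)]
    calc (K₁ * Real.sqrt u + K₂) * Real.exp (b*u - c/6*u^3)
        ≤ (K₁ + K₂) * Real.exp u * Real.exp (b*u - 1/6*u^3) := by
          apply mul_le_mul (le_trans hcoef hcoef2) hexp (Real.exp_pos _).le
          positivity
      _ = (K₁ + K₂) * Real.exp ((1 + b) * u - 1/6*u^3) := by
          rw [mul_assoc, ← Real.exp_add]; congr 2; ring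

/-- With `V x = λ √E x + E^{3/2} x³/3`, `E ≥ 1`, and
`f x = 2 e^{-2V x} ∫_{-∞}^x e^{2V y} dy`, one has
`lim_{A→∞} ∫_{-A}^A 2x f x dx
  = ∫₀^∞ u e^{-2λ√E u - (E^{3/2}/6) u³} (∫_ℝ e^{-(E^{3/2}/2) u v²} dv) du
  = (√(2π)/E^{3/4}) ∫₀^∞ √u e^{-2λ√E u - (E^{3/2}/6) u³} du`. -/
theorem first_moment_invariant_density (lam E : ℝ) (hE : 1 ≤ E)
    (V f : ℝ → ℝ)
    (hV : ∀ x, V x = lam * Real.sqrt E * x + E ^ ((3:ℝ)/2) * x ^ 3 / 3)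
    (hf : ∀ x, f x = 2 * Real.exp (-2 * V x) * ∫ y in Iic x, Real.exp (2 * V y)) :
    Tendsto (fun A : ℝ => ∫ x in (-A)..A, 2 * x * f x) atTop
      (nhds (∫ u in Ioi (0:ℝ),
        u * Real.exp (-2 * lam * Real.sqrt E * u - E ^ ((3:ℝ)/2) / 6 * u ^ 3) *
          ∫ v : ℝ, Real.exp (-(E ^ ((3:ℝ)/2) / 2) * u * v ^ 2))) ∧
    (∫ u in Ioi (0:ℝ),
        u * Real.exp (-2 * lam * Real.sqrt E * u - E ^ ((3:ℝ)/2) / 6 * u ^ 3) *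
          ∫ v : ℝ, Real.exp (-(E ^ ((3:ℝ)/2) / 2) * u * v ^ 2))
      = (Real.sqrt (2 * π) / E ^ ((3:ℝ)/4)) *
          ∫ u in Ioi (0:ℝ),
            Real.sqrt u * Real.exp (-2 * lam * Real.sqrt E * u - E ^ ((3:ℝ)/2) / 6 * u ^ 3) := by
  have hE0 : (0:ℝ) < E := lt_of_lt_of_le one_pos hE
  set c : ℝ := E ^ ((3:ℝ)/2) with hcdef
  have hc1 : 1 ≤ c := Real.one_le_rpow hE (by norm_num)
  have hc0 : (0:ℝ) < c := lt_of_lt_of_le one_pos hc1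
  -- kernel
  set K : ℝ → ℝ → ℝ := fun x u =>
    4 * x * Real.exp (-2 * lam * Real.sqrt E * u - c/6*u^3 - c/2*u*(2*x-u)^2) with hKdef
  have hKcont : Continuous (fun p : ℝ × ℝ => K p.1 p.2) := by
    rw [hKdef]; fun_prop
  -- representation of 2 x f x
  have hrep : ∀ x, 2 * x * f x = ∫ u in Ioi (0:ℝ), K x u := by
    intro x
    have h1 : (∫ y in Iic x, Real.exp (2 * V y))
        = ∫ u in Ioi (0:ℝ), Real.exp (2 * V (x - u)) := iic_shift _ x
    rw [hf x, h1]
    rw [show 2 * x * (2 * Real.exp (-2 * V x) * ∫ u in Ioi (0:ℝ), Real.exp (2 * V (x - u)))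
      = (4 * x * Real.exp (-2 * V x)) * ∫ u in Ioi (0:ℝ), Real.exp (2 * V (x - u)) by ring]
    rw [← integral_const_mul]
    refine setIntegral_congr_fun measurableSet_Ioi (fun u hu => ?_)
    rw [hKdef]
    simp only
    rw [mul_assoc, ← Real.exp_add]
    congr 2
    rw [hV x, hV (x - u), hcdef]
    ring
  -- integrability of K x · on Ioi 0
  have hKint : ∀ x : ℝ, IntegrableOn (fun u => K x u) (Ioi (0:ℝ)) := by
    intro x
    refine Integrable.mono'
      ((integrable_cubic_exp (2*|lam * Real.sqrt E|) (1/6) (by norm_num)).const_mul (4*|x|))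
      ((hKcont.comp (Continuous.prodMk_right x)).aestronglyMeasurable.restrict) ?_
    refine (ae_restrict_iff' measurableSet_Ioi).2 (Eventually.of_forall (fun u hu => ?_))
    have hu0 : (0:ℝ) < u := hu
    rw [hKdef]
    simp only
    rw [Real.norm_eq_abs, abs_mul, Real.abs_exp,
      show |(4:ℝ) * x| = 4 * |x| by rw [abs_mul]; norm_num]
    apply mul_le_mul_of_nonneg_left _ (by positivity)
    apply Real.exp_le_exp.2
    have e1 : -2 * lam * Real.sqrt E * u ≤ 2*|lam * Real.sqrt E| * u := by
      have hla := mul_le_mul_of_nonneg_right (neg_abs_le (lam * Real.sqrt E)) hu0.le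
      nlinarith
    have e2 : c/6*u^3 ≥ 1/6*u^3 := by nlinarith [pow_pos hu0 3]
    have e3 : 0 ≤ c/2*u*(2*x-u)^2 := by positivity
    linarith
  -- the inner integral over x, as a function of u
  set H : ℝ → ℝ → ℝ := fun A u => ∫ x in Ioc (-A) A, K x u with hHdef
  -- Fubini: for 0 ≤ A
  have hfub : ∀ A : ℝ, 0 ≤ A →
      (∫ x in (-A)..A, 2 * x * f x) = ∫ u in Ioi (0:ℝ), H A u := by
    intro A hA
    rw [intervalIntegral.integral_of_le (by linarith : -A ≤ A)]
    rw [show (fun x => 2 * x * f x) = fun x => ∫ u in Ioi (0:ℝ), K x u from funext hrep]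
    have hprod : Integrable (fun p : ℝ × ℝ => K p.1 p.2)
        ((volume.restrict (Ioc (-A) A)).prod (volume.restrict (Ioi 0))) := by
      rw [integrable_prod_iff hKcont.aestronglyMeasurable]
      constructor
      · exact Eventually.of_forall (fun x => hKint x)
      · set I : ℝ := ∫ u in Ioi (0:ℝ), Real.exp (2*|lam * Real.sqrt E| * u - 1/6 * u ^ 3) with hI
        have hInn : 0 ≤ I := by
          rw [hI]; positivity
        refine Integrable.mono' (g := fun _ => 4*A*I)
          (integrableOn_const measure_Ioc_lt_top.ne) ?_ ?_
        · exact (hKcont.norm.aestronglyMeasurable.integral_prod_right').restrict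
        · refine (ae_restrict_iff' measurableSet_Ioc).2 (Eventually.of_forall (fun x hx => ?_))
          have hxA : |x| ≤ A := by
            rcases hx with ⟨h1, h2⟩
            rw [abs_le]; constructor <;> linarith
          have hnn : 0 ≤ ∫ u in Ioi (0:ℝ), ‖K x u‖ := by positivity
          rw [Real.norm_eq_abs, abs_of_nonneg hnn]
          have hmono : (∫ u in Ioi (0:ℝ), ‖K x u‖)
              ≤ ∫ u in Ioi (0:ℝ), 4*|x| * Real.exp (2*|lam * Real.sqrt E| * u - 1/6 * u ^ 3) := by
            refine setIntegral_mono_on (hKint x).norm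
              (((integrable_cubic_exp (2*|lam * Real.sqrt E|) (1/6) (by norm_num)).const_mul
                (4*|x|))) measurableSet_Ioi (fun u hu => ?_)
            have hu0 : (0:ℝ) < u := hu
            rw [hKdef]
            simp only
            rw [Real.norm_eq_abs, abs_mul, Real.abs_exp,
              show |(4:ℝ) * x| = 4 * |x| by rw [abs_mul]; norm_num]
            apply mul_le_mul_of_nonneg_left _ (by positivity)
            apply Real.exp_le_exp.2
            have e1 : -2 * lam * Real.sqrt E * u ≤ 2*|lam * Real.sqrt E| * u := by
              have hla := mul_le_mul_of_nonneg_right (neg_abs_le (lam * Real.sqrt E)) hu0.le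
              nlinarith
            have e2 : c/6*u^3 ≥ 1/6*u^3 := by nlinarith [pow_pos hu0 3]
            have e3 : 0 ≤ c/2*u*(2*x-u)^2 := by positivity
            linarith
          calc (∫ u in Ioi (0:ℝ), ‖K x u‖)
              ≤ ∫ u in Ioi (0:ℝ), 4*|x| * Real.exp (2*|lam * Real.sqrt E| * u - 1/6 * u ^ 3) :=
                hmono
            _ = 4*|x| * I := by rw [hI, integral_const_mul]
            _ ≤ 4*A*I := by
                apply mul_le_mul_of_nonneg_right _ hInn
                nlinarith [abs_nonneg x]
    exact integral_integral_swap hprod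
  -- substitution identity for the inner integral
  have hsub : ∀ A : ℝ, 0 ≤ A → ∀ u : ℝ,
      H A u = Real.exp (-2 * lam * Real.sqrt E * u - c/6*u^3) *
        ∫ v in (-(2*A)-u)..(2*A-u), (v+u) * Real.exp (-(c/2)*u*v^2) := by
    intro A hA u
    rw [hHdef]
    simp only
    rw [← intervalIntegral.integral_of_le (by linarith : -A ≤ A)]
    have h1 : ∀ x : ℝ, K x u
        = (fun v => 2 * ((v+u) * (Real.exp (-2 * lam * Real.sqrt E * u - c/6*u^3) *
            Real.exp (-(c/2)*u*v^2)))) (2*x - u) := by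
      intro x
      rw [hKdef]
      simp only
      rw [← Real.exp_add]
      rw [show (-2 * lam * Real.sqrt E * u - c/6*u^3) + -(c/2)*u*(2*x-u)^2
        = -2 * lam * Real.sqrt E * u - c/6*u^3 - c/2*u*(2*x-u)^2 by ring]
      ring
    rw [intervalIntegral.integral_congr (fun x _ => h1 x)]
    rw [intervalIntegral.integral_comp_mul_sub
      (fun v => 2 * ((v+u) * (Real.exp (-2 * lam * Real.sqrt E * u - c/6*u^3) *
        Real.exp (-(c/2)*u*v^2)))) two_ne_zero u]
    rw [show (2:ℝ) * -A - u = -(2*A) - u by ring]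
    rw [smul_eq_mul, ← intervalIntegral.integral_const_mul, ← intervalIntegral.integral_const_mul]
    congr 1; ext v; ring
  -- Part 1: dominated convergence
  have part1 : Tendsto (fun A : ℝ => ∫ u in Ioi (0:ℝ), H A u) atTop
      (nhds (∫ u in Ioi (0:ℝ),
        u * Real.exp (-2 * lam * Real.sqrt E * u - c / 6 * u ^ 3) *
          ∫ v : ℝ, Real.exp (-(c / 2) * u * v ^ 2))) := by
    refine tendsto_integral_filter_of_dominated_convergence
      (fun u => (Real.sqrt (2*π/c) * Real.sqrt u + 8/c) *
        Real.exp (-2 * lam * Real.sqrt E * u - c/6*u^3)) ?_ ?_ ?_ ?_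
    · refine Eventually.of_forall (fun A => ?_)
      rw [hHdef]
      exact (hKcont.comp continuous_swap).aestronglyMeasurable.integral_prod_right'
    · filter_upwards [eventually_ge_atTop (1:ℝ)] with A hA
      refine (ae_restrict_iff' measurableSet_Ioi).2 (Eventually.of_forall (fun u hu => ?_))
      have hu0 : (0:ℝ) < u := hu
      rw [hsub A (by linarith) u]
      rw [Real.norm_eq_abs, abs_mul, Real.abs_exp, mul_comm]
      apply mul_le_mul_of_nonneg_right _ (Real.exp_pos _).le
      exact G_bound c u A hc1 hu0 hA
    · exact D_integrable (-2 * lam * Real.sqrt E) c _ _ hc1 (by positivity) (by positivity)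
    · refine (ae_restrict_iff' measurableSet_Ioi).2 (Eventually.of_forall (fun u hu => ?_))
      have hu0 : (0:ℝ) < u := hu
      have hG := (G_tendsto c u hc0 hu0).const_mul
        (Real.exp (-2 * lam * Real.sqrt E * u - c/6*u^3))
      have heq : Real.exp (-2 * lam * Real.sqrt E * u - c/6*u^3) *
          (u * ∫ v : ℝ, Real.exp (-(c/2)*u*v^2))
          = u * Real.exp (-2 * lam * Real.sqrt E * u - c / 6 * u ^ 3) *
            ∫ v : ℝ, Real.exp (-(c / 2) * u * v ^ 2) := by ring
      rw [heq] at hG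
      refine Tendsto.congr' ?_ hG
      filter_upwards [eventually_ge_atTop (0:ℝ)] with A hA
      exact (hsub A hA u).symm
  have tendsto1 : Tendsto (fun A : ℝ => ∫ x in (-A)..A, 2 * x * f x) atTop
      (nhds (∫ u in Ioi (0:ℝ),
        u * Real.exp (-2 * lam * Real.sqrt E * u - c / 6 * u ^ 3) *
          ∫ v : ℝ, Real.exp (-(c / 2) * u * v ^ 2))) := by
    refine Tendsto.congr' ?_ part1
    filter_upwards [eventually_ge_atTop (0:ℝ)] with A hA
    exact (hfub A hA).symm
  refine ⟨tendsto1, ?_⟩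
  -- Part 2
  have hsqrtc : Real.sqrt c = E ^ ((3:ℝ)/4) := by
    rw [hcdef, Real.sqrt_eq_rpow, ← Real.rpow_mul hE0.le]
    norm_num
  have hptwise : ∀ u ∈ Ioi (0:ℝ),
      u * Real.exp (-2 * lam * Real.sqrt E * u - c / 6 * u ^ 3) *
          ∫ v : ℝ, Real.exp (-(c / 2) * u * v ^ 2)
        = (Real.sqrt (2 * π) / E ^ ((3:ℝ)/4)) *
          (Real.sqrt u * Real.exp (-2 * lam * Real.sqrt E * u - c / 6 * u ^ 3)) := by
    intro u hu
    have hu0 : (0:ℝ) < u := hu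
    have hrw : ∀ v : ℝ, -(c/2)*u*v^2 = -(c/2*u)*v^2 := fun v => by ring
    simp only [hrw]
    rw [integral_gaussian (c/2*u)]
    have h1 : u * Real.exp (-2 * lam * Real.sqrt E * u - c / 6 * u ^ 3) * Real.sqrt (π/(c/2*u))
        = (u * Real.sqrt (π/(c/2*u))) * Real.exp (-2 * lam * Real.sqrt E * u - c / 6 * u ^ 3) := by
      ring
    rw [h1, sqrt_pi_div c u hc0 hu0]
    have h2 : Real.sqrt (2*π/c) = Real.sqrt (2*π) / E ^ ((3:ℝ)/4) := by
      rw [Real.sqrt_div (by positivity) c, hsqrtc]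
    rw [h2]
    ring
  rw [setIntegral_congr_fun measurableSet_Ioi hptwise, integral_const_mul]
end

section
/- Let φ be a unit L² function on ℝ with center of mass U = ∫ t φ²(t) dt, and suppose (φ(t)² + ψ(t)²)^{1/2} ≤ c̃ exp(-(ν/2)|t - Ũ|) for all t and some point Ũ and constants c̃, ν > 0. Then for any a ∈ (0, ν), exp(a |Ũ - U|) ≤ 2 c̃²/(ν - a); consequently φ also decays exponentially from U: (φ(t)² + ψ(t)²)^{1/2} ≤ c exp(-(ν/2)|t-U|) with c = c̃ (2c̃²/(ν-a))^{ν/(2a)}. -/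
open MeasureTheory Real Set

lemma exp_abs_integrable' {b : ℝ} (hb : 0 < b) :
    Integrable (fun t : ℝ => Real.exp (-b * |t|)) := by
  have hIoi : IntegrableOn (fun t : ℝ => Real.exp (-b * |t|)) (Ioi 0) := by
    refine (exp_neg_integrableOn_Ioi 0 hb).congr_fun (fun x hx => ?_) measurableSet_Ioi
    rw [abs_of_pos hx]
  have hIic : IntegrableOn (fun t : ℝ => Real.exp (-b * |t|)) (Iic 0) := by
    rw [← Measure.map_neg_eq_self (volume : Measure ℝ)]
    have m : MeasurableEmbedding fun x : ℝ => -x := (Homeomorph.neg ℝ).measurableEmbedding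
    rw [m.integrableOn_map_iff]
    simp_rw [Function.comp_def, abs_neg, neg_preimage, neg_Iic, neg_zero]
    exact Iff.mpr integrableOn_Ici_iff_integrableOn_Ioi hIoi
  have h := hIic.union hIoi
  rwa [Iic_union_Ioi, integrableOn_univ] at h

lemma exp_abs_integral' {b : ℝ} (hb : 0 < b) :
    (∫ t : ℝ, Real.exp (-b * |t|)) = 2 / b := by
  have h1 : (∫ t : ℝ, Real.exp (-b * |t|))
      = 2 * ∫ x in Ioi (0 : ℝ), Real.exp (-b * x) :=
    integral_comp_abs (f := fun t => Real.exp (-b * t))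
  have h2 : (∫ x in Ioi (0 : ℝ), Real.exp (-b * x))
      = b⁻¹ • ∫ x in Ioi (b * 0), Real.exp (-x) := by
    have := integral_comp_mul_left_Ioi (fun x => Real.exp (-x)) 0 hb
    simpa [neg_mul] using this
  rw [h1, h2]
  rw [mul_zero, integral_exp_neg_Ioi_zero]
  simp [smul_eq_mul]
  ring

lemma exp_abs_shift_integrable {b c : ℝ} (hb : 0 < b) :
    Integrable (fun t : ℝ => Real.exp (-b * |t - c|)) :=
  (exp_abs_integrable' hb).comp_sub_right c

lemma exp_abs_shift_integral {b c : ℝ} (hb : 0 < b) :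
    (∫ t : ℝ, Real.exp (-b * |t - c|)) = 2 / b := by
  have := integral_sub_right_eq_self (μ := volume) (fun t : ℝ => Real.exp (-b * |t|)) c
  rw [this, exp_abs_integral' hb]

/-- Let `φ` be a unit `L²` function on `ℝ` with center of mass
`U = ∫ t φ² dt`, and suppose `√(φ t² + ψ t²) ≤ c̃ exp (-(ν/2)|t - Ũ|)` for all `t`,
for some point `Ũ` and constants `c̃, ν > 0`.  Then for any `a ∈ (0, ν)`,
`exp (a |Ũ - U|) ≤ 2 c̃²/(ν - a)`, and consequently
`√(φ t² + ψ t²) ≤ c exp (-(ν/2)|t - U|)` with `c = c̃ (2c̃²/(ν-a))^{ν/(2a)}`. -/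
theorem recenter_exponential_decay
    (φ ψ : ℝ → ℝ) (ctil ν Utilde : ℝ) (hctil : 0 < ctil) (hν : 0 < ν)
    (hnorm : (∫ t : ℝ, (φ t) ^ 2) = 1)
    (hdecay : ∀ t : ℝ, Real.sqrt ((φ t) ^ 2 + (ψ t) ^ 2)
        ≤ ctil * Real.exp (-(ν / 2) * |t - Utilde|)) :
    ∀ a : ℝ, 0 < a → a < ν →
      Real.exp (a * |Utilde - ∫ t : ℝ, t * (φ t) ^ 2|) ≤ 2 * ctil ^ 2 / (ν - a) ∧
      ∀ t : ℝ, Real.sqrt ((φ t) ^ 2 + (ψ t) ^ 2)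
          ≤ (ctil * (2 * ctil ^ 2 / (ν - a)) ^ (ν / (2 * a))) *
              Real.exp (-(ν / 2) * |t - ∫ s : ℝ, s * (φ s) ^ 2|) := by
  intro a ha haν
  have hνa : 0 < ν - a := by linarith
  set w : ℝ → ℝ := fun t => (φ t) ^ 2 with hw_def
  set U : ℝ := ∫ t : ℝ, t * (φ t) ^ 2 with hU_def
  have hw0 : ∀ t, 0 ≤ w t := fun t => sq_nonneg _
  -- pointwise decay of w
  have hwb : ∀ t, w t ≤ ctil ^ 2 * Real.exp (-ν * |t - Utilde|) := by
    intro t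
    have h1 := hdecay t
    have h2 : (φ t) ^ 2 + (ψ t) ^ 2
        = (Real.sqrt ((φ t) ^ 2 + (ψ t) ^ 2)) ^ 2 :=
      (Real.sq_sqrt (by positivity)).symm
    have h3 : (Real.sqrt ((φ t) ^ 2 + (ψ t) ^ 2)) ^ 2
        ≤ (ctil * Real.exp (-(ν / 2) * |t - Utilde|)) ^ 2 := by
      exact pow_le_pow_left₀ (Real.sqrt_nonneg _) h1 2
    have h4 : (ctil * Real.exp (-(ν / 2) * |t - Utilde|)) ^ 2
        = ctil ^ 2 * Real.exp (-ν * |t - Utilde|) := by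
      have hsq : ∀ x : ℝ, Real.exp x ^ 2 = Real.exp (2 * x) := fun x => by
        rw [sq, ← Real.exp_add, two_mul]
      rw [mul_pow, hsq]
      congr 1
      ring
    have h5 : w t ≤ (φ t) ^ 2 + (ψ t) ^ 2 := le_add_of_nonneg_right (sq_nonneg _)
    calc w t ≤ (φ t) ^ 2 + (ψ t) ^ 2 := h5
      _ = _ := h2
      _ ≤ _ := h3
      _ = _ := h4
  have hwint : Integrable w := by
    by_contra h
    rw [hw_def] at h
    rw [integral_undef h] at hnorm
    norm_num at hnorm
  have hwm : AEStronglyMeasurable w volume := hwint.1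
  -- the dominating integrable function
  have hexpint : Integrable (fun t : ℝ => ctil ^ 2 * Real.exp (-(ν - a) * |t - Utilde|)) :=
    (exp_abs_shift_integrable hνa).const_mul _
  -- pointwise bound
  have hbound1 : ∀ t, Real.exp (a * |Utilde - t|) * w t
      ≤ ctil ^ 2 * Real.exp (-(ν - a) * |t - Utilde|) := by
    intro t
    have h := mul_le_mul_of_nonneg_left (hwb t) (Real.exp_pos (a * |Utilde - t|)).le
    calc Real.exp (a * |Utilde - t|) * w t
        ≤ Real.exp (a * |Utilde - t|) * (ctil ^ 2 * Real.exp (-ν * |t - Utilde|)) := h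
      _ = ctil ^ 2 * Real.exp (-(ν - a) * |t - Utilde|) := by
          rw [abs_sub_comm Utilde t]
          rw [mul_comm, mul_assoc, ← Real.exp_add]
          ring_nf
  have hbound2 : ∀ t, a * |Utilde - t| * w t ≤ Real.exp (a * |Utilde - t|) * w t := by
    intro t
    have hx : a * |Utilde - t| ≤ Real.exp (a * |Utilde - t|) := by
      have := Real.add_one_le_exp (a * |Utilde - t|)
      linarith
    exact mul_le_mul_of_nonneg_right hx (hw0 t)
  -- integrabilities
  have Icont : ∀ (f : ℝ → ℝ), Continuous f → AEStronglyMeasurable (fun t => f t * w t) volume :=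
    fun f hf => hf.aestronglyMeasurable.mul hwm
  have hnorm_le : ∀ {x y : ℝ}, 0 ≤ x → 0 ≤ y → x ≤ y → ‖x‖ ≤ ‖y‖ := by
    intro x y hx hy hxy
    rwa [Real.norm_eq_abs, Real.norm_eq_abs, abs_of_nonneg hx, abs_of_nonneg hy]
  have I1 : Integrable (fun t : ℝ => Real.exp (a * |Utilde - t|) * w t) := by
    refine hexpint.mono (Icont _ (by fun_prop)) (Filter.Eventually.of_forall fun t => ?_)
    exact hnorm_le (mul_nonneg (Real.exp_pos _).le (hw0 t)) (by positivity) (hbound1 t)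
  have I2 : Integrable (fun t : ℝ => a * |Utilde - t| * w t) := by
    refine I1.mono (Icont _ (by fun_prop)) (Filter.Eventually.of_forall fun t => ?_)
    exact hnorm_le (mul_nonneg (mul_nonneg ha.le (abs_nonneg _)) (hw0 t))
      (mul_nonneg (Real.exp_pos _).le (hw0 t)) (hbound2 t)
  have I3 : Integrable (fun t : ℝ => |Utilde - t| * w t) := by
    have h := I2.const_mul a⁻¹
    refine h.congr (Filter.Eventually.of_forall fun t => ?_)
    field_simp
  have Itw : Integrable (fun t : ℝ => t * w t) := by
    have Ia : Integrable (fun t : ℝ => (t - Utilde) * w t) := by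
      refine I3.mono (Icont _ (by fun_prop)) (Filter.Eventually.of_forall fun t => ?_)
      have h : |t - Utilde| * |w t| ≤ |Utilde - t| * |w t| := by rw [abs_sub_comm]
      simpa [Real.norm_eq_abs, abs_mul] using h
    have Ib := Ia.add (hwint.const_mul Utilde)
    refine Ib.congr (Filter.Eventually.of_forall fun t => ?_)
    simp only [Pi.add_apply]
    ring
  -- the mean m
  set m : ℝ := ∫ t : ℝ, a * |Utilde - t| * w t with hm_def
  -- Step A
  have hstep1 : a * |Utilde - U| ≤ m := by
    have he : (∫ t : ℝ, (Utilde - t) * w t) = Utilde - U := by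
      have : (fun t : ℝ => (Utilde - t) * w t)
          = fun t : ℝ => Utilde * w t - t * w t := by funext t; ring
      have hA' : Integrable (fun t : ℝ => Utilde * w t) volume := hwint.const_mul Utilde
      have hw1 : (∫ t : ℝ, w t) = 1 := hnorm
      rw [this, integral_sub hA' Itw, integral_const_mul, hw1, hU_def]
      simp only [hw_def]
      ring
    have habs : |∫ t : ℝ, (Utilde - t) * w t| ≤ ∫ t : ℝ, |Utilde - t| * w t := by
      have h := norm_integral_le_integral_norm (μ := volume) (fun t : ℝ => (Utilde - t) * w t)
      simp only [Real.norm_eq_abs] at h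
      refine h.trans (le_of_eq (integral_congr_ae (Filter.Eventually.of_forall fun t => ?_)))
      show |(Utilde - t) * w t| = |Utilde - t| * w t
      rw [abs_mul, abs_of_nonneg (hw0 t)]
    rw [he] at habs
    have hmm : m = a * ∫ t : ℝ, |Utilde - t| * w t := by
      rw [hm_def, ← integral_const_mul]
      congr 1; funext t; ring
    rw [hmm]
    exact mul_le_mul_of_nonneg_left habs ha.le
  -- Step B : Jensen via exp x ≥ 1 + x
  have hstep2 : Real.exp m ≤ ∫ t : ℝ, Real.exp (a * |Utilde - t|) * w t := by
    have hpt : ∀ t : ℝ, Real.exp m * (w t + a * |Utilde - t| * w t - m * w t)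
        ≤ Real.exp (a * |Utilde - t|) * w t := by
      intro t
      have h1 : (a * |Utilde - t| - m) + 1 ≤ Real.exp (a * |Utilde - t| - m) :=
        Real.add_one_le_exp _
      have h2 : Real.exp m * Real.exp (a * |Utilde - t| - m)
          = Real.exp (a * |Utilde - t|) := by rw [← Real.exp_add]; ring_nf
      nlinarith [Real.exp_pos m, hw0 t,
        mul_le_mul_of_nonneg_right h1 (hw0 t), Real.exp_pos (a * |Utilde - t| - m)]
    have hA : Integrable (fun t : ℝ => w t + a * |Utilde - t| * w t) volume := hwint.add I2
    have hB : Integrable (fun t : ℝ => m * w t) volume := hwint.const_mul m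
    have hIlhs : Integrable (fun t : ℝ => w t + a * |Utilde - t| * w t - m * w t) :=
      hA.sub hB
    have hval : (∫ t : ℝ, (w t + a * |Utilde - t| * w t - m * w t)) = 1 := by
      rw [integral_sub hA hB, integral_add hwint I2, integral_const_mul]
      have hw1 : (∫ t : ℝ, w t) = 1 := hnorm
      rw [hw1, ← hm_def]
      ring
    calc Real.exp m = Real.exp m * ∫ t : ℝ, (w t + a * |Utilde - t| * w t - m * w t) := by
          rw [hval]; ring
      _ = ∫ t : ℝ, Real.exp m * (w t + a * |Utilde - t| * w t - m * w t) := by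
          rw [integral_const_mul]
      _ ≤ ∫ t : ℝ, Real.exp (a * |Utilde - t|) * w t := by
          exact integral_mono (hIlhs.const_mul _) I1 hpt
  -- Step C
  have hstep3 : (∫ t : ℝ, Real.exp (a * |Utilde - t|) * w t) ≤ 2 * ctil ^ 2 / (ν - a) := by
    have h := integral_mono I1 hexpint hbound1
    have hval : (∫ t : ℝ, ctil ^ 2 * Real.exp (-(ν - a) * |t - Utilde|))
        = 2 * ctil ^ 2 / (ν - a) := by
      rw [integral_const_mul, exp_abs_shift_integral hνa]
      ring
    rwa [hval] at h
  have claim1 : Real.exp (a * |Utilde - U|) ≤ 2 * ctil ^ 2 / (ν - a) :=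
    (Real.exp_le_exp.mpr hstep1).trans (hstep2.trans hstep3)
  refine ⟨claim1, ?_⟩
  -- second claim
  intro t
  set K : ℝ := 2 * ctil ^ 2 / (ν - a) with hK_def
  have hexp_le : Real.exp ((ν / 2) * |Utilde - U|) ≤ K ^ (ν / (2 * a)) := by
    have heq : Real.exp ((ν / 2) * |Utilde - U|)
        = (Real.exp (a * |Utilde - U|)) ^ (ν / (2 * a)) := by
      rw [← Real.exp_mul]
      congr 1
      field_simp
    rw [heq]
    exact Real.rpow_le_rpow (Real.exp_pos _).le claim1 (by positivity)
  have htri : |t - U| ≤ |t - Utilde| + |Utilde - U| := abs_sub_le t Utilde U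
  have hE : Real.exp (-(ν / 2) * |t - Utilde|)
      ≤ Real.exp ((ν / 2) * |Utilde - U|) * Real.exp (-(ν / 2) * |t - U|) := by
    rw [← Real.exp_add]
    apply Real.exp_le_exp.mpr
    nlinarith [hν]
  calc Real.sqrt ((φ t) ^ 2 + (ψ t) ^ 2)
      ≤ ctil * Real.exp (-(ν / 2) * |t - Utilde|) := hdecay t
    _ ≤ ctil * (Real.exp ((ν / 2) * |Utilde - U|) * Real.exp (-(ν / 2) * |t - U|)) :=
        mul_le_mul_of_nonneg_left hE hctil.le
    _ ≤ ctil * (K ^ (ν / (2 * a)) * Real.exp (-(ν / 2) * |t - U|)) := by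
        have := mul_le_mul_of_nonneg_right hexp_le (Real.exp_pos (-(ν / 2) * |t - U|)).le
        exact mul_le_mul_of_nonneg_left this hctil.le
    _ = (ctil * K ^ (ν / (2 * a))) * Real.exp (-(ν / 2) * |t - U|) := by ring
end
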